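/- Let t be a positive integer and λ a t-core partition. Then the size of λ satisfies |λ| = Σ_{i=1}^{t−1} ( i·n_i(λ) + t·C(n_i(λ), 2) ) − C( Σ_{i=1}^{t−1} n_i(λ), 2 ), where C(n,2) = n(n−1)/2. -/

import Mathlib

/-- A partition: a finite weakly decreasing list of positive integers. -/
structure Partn where
  parts : List ℕ
  pos : ∀ p ∈ parts, 0 < p
  sorted : parts.Pairwise (· ≥ ·)

namespace Partn

/-- The size of a partition: the sum of its parts. -/
def size (l : Partn) : ℕ := l.parts.sum

/-- The number of rows `k` (0-indexed) with `λ_k ≥ j` (the length of column `j`). -/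
def colLen (l : Partn) (j : ℕ) : ℕ := (l.parts.filter (fun p => j ≤ p)).length

/-- The hook length of the box in row `i` (0-indexed) and column `j` (1-indexed):
`λ_i − j + #{k : λ_k ≥ j} − i + 1` (with 1-indexed rows). -/
def hook (l : Partn) (i j : ℕ) : ℕ :=
  (l.parts.getD i 0 - j) + (l.colLen j - (i + 1)) + 1

/-- A partition is a `t`-core if none of its hook lengths is divisible by `t`. -/
def IsCore (t : ℕ) (l : Partn) : Prop :=
  ∀ i j : ℕ, i < l.parts.length → 1 ≤ j → j ≤ l.parts.getD i 0 → ¬ (t ∣ l.hook i j)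

/-- A partition has distinct parts if its parts are strictly decreasing. -/
def DistinctParts (l : Partn) : Prop := l.parts.Pairwise (· > ·)

/-- The β-set of a partition: `{λ_i + ℓ − i : 1 ≤ i ≤ ℓ}` (1-indexed). -/
def betaSet (l : Partn) : Finset ℕ :=
  (Finset.range l.parts.length).image
    (fun i => l.parts.getD i 0 + (l.parts.length - 1 - i))

/-- `nFn t i l` is the number of elements of the β-set of `l` congruent to `i` mod `t`. -/
def nFn (t i : ℕ) (l : Partn) : ℕ :=
  (l.betaSet.filter (fun x => x % t = i)).card

end Partn

/-!
Write `β_i = λ_i + ℓ - 1 - i` for the β-numbers of `λ`; they are distinct, there are `ℓ` of them,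
and they sum to `|λ| + C(ℓ, 2)`. The numbers missing from the β-set below `β_i` are
`gap j = ℓ + j - 1 - λ'_j` for `1 ≤ j ≤ λ_i`, and the hook length of the box `(i, j)` is
`β_i - gap j`. Hence, for a `t`-core, no β-number is divisible by `t` (`β_i` is the hook length of
`(i, 1)`), and `x - t` is a β-number whenever `x ≥ t` is one. So the β-numbers in the residue class
`r ≠ 0` are exactly `r, r + t, …, r + (n_r - 1) t`, with sum `r n_r + t C(n_r, 2)`; summing over
`r` and using `ℓ = ∑ n_r` gives the formula.
-/

open Finset

theorem Finset.eq_range_card_of_isLowerSet {S : Finset ℕ} (hS : IsLowerSet (S : Set ℕ)) :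
    S = range #S := by
  obtain h | ⟨a, ha⟩ := hS.eq_univ_or_Iio
  · exact absurd (h ▸ S.finite_toSet) Set.infinite_univ
  · have hS : S = range a := coe_injective (by simpa using ha)
    rw [hS, card_range]

theorem Nat.exists_le_lt_succ_of_le_of_lt {f : ℕ → ℕ} {a b y : ℕ} (hab : a ≤ b)
    (ha : f a ≤ y) (hb : y < f b) : ∃ j, a ≤ j ∧ j < b ∧ f j ≤ y ∧ y < f (j + 1) := by
  induction b, hab using Nat.le_induction with
  | base => omega
  | succ b hab ih =>
    by_cases hyb : y < f b
    · obtain ⟨j, hj⟩ := ih hyb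
      exact ⟨j, hj.1, by omega, hj.2.2⟩
    · exact ⟨b, hab, by omega, by omega, hb⟩

theorem Finset.sum_range_id_eq_choose_two (n : ℕ) : ∑ m ∈ range n, m = n.choose 2 := by
  rw [sum_range_id, Nat.choose_two_right]

section SubClosed

variable {B : Finset ℕ} {t : ℕ}

theorem Finset.sub_mul_mem_of_sub_mem (hB : ∀ x ∈ B, t ≤ x → x - t ∈ B) {x : ℕ} (hx : x ∈ B)
    {k : ℕ} (hk : t * k ≤ x) : x - t * k ∈ B := by
  induction k with
  | zero => simpa using hx
  | succ k ih =>
    have h := hB _ (ih (by nlinarith)) (by rw [Nat.mul_succ] at hk; omega)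
    rwa [Nat.sub_sub, ← Nat.mul_succ] at h

theorem Finset.filter_mod_eq_image_range (ht : 0 < t) (hB : ∀ x ∈ B, t ≤ x → x - t ∈ B) (r : ℕ) :
    {x ∈ B | x % t = r} = (range #{x ∈ B | x % t = r}).image (fun m => r + t * m) := by
  set C := {x ∈ B | x % t = r}
  have hC : ∀ x ∈ C, r + t * (x / t) = x := fun x hx => by
    rw [← (mem_filter.1 hx).2, Nat.mod_add_div]
  have hinj : Set.InjOn (· / t) C := fun x hx y hy hxy => by
    rw [← hC x hx, ← hC y hy]; simp_all
  have hlower : IsLowerSet (C.image (· / t) : Set ℕ) := by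
    intro _ m hm hq
    rw [coe_image] at hq
    obtain ⟨x, hx, rfl⟩ := hq
    obtain ⟨d, hd⟩ : ∃ d, x / t = m + d := Nat.exists_eq_add_of_le hm
    obtain ⟨hxB, hxr⟩ := mem_filter.1 hx
    have hrt : r < t := hxr ▸ Nat.mod_lt x ht
    have hx' : r + t * m + t * d = x := by rw [add_assoc, ← Nat.mul_add, ← hd, hC x hx]
    refine mem_coe.2 (mem_image.2 ⟨r + t * m, mem_filter.2 ⟨?_, ?_⟩, ?_⟩)
    · simpa [← hx'] using sub_mul_mem_of_sub_mem hB hxB (k := d) (by omega)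
    · simp [Nat.add_mul_mod_self_left, Nat.mod_eq_of_lt hrt]
    · simp [Nat.add_mul_div_left _ _ ht, Nat.div_eq_of_lt hrt]
  calc C = (C.image (· / t)).image (fun m => r + t * m) := by
          rw [image_image]; exact (image_congr hC ▸ image_id).symm
    _ = _ := by rw [← card_image_of_injOn hinj, ← eq_range_card_of_isLowerSet hlower]

theorem Finset.sum_filter_mod_eq_of_sub_mem (ht : 0 < t) (hB : ∀ x ∈ B, t ≤ x → x - t ∈ B) (r : ℕ) :
    ∑ x ∈ B with x % t = r, x =
      r * #{x ∈ B | x % t = r} + t * (#{x ∈ B | x % t = r}).choose 2 := by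
  conv_lhs => rw [filter_mod_eq_image_range ht hB r]
  rw [sum_image fun _ _ _ _ h => by simpa [ht.ne'] using h, sum_add_distrib, ← mul_sum,
    sum_range_id_eq_choose_two, sum_const, card_range, smul_eq_mul, mul_comm]

end SubClosed

theorem List.le_getD_iff_lt_length_filter {P : List ℕ} (hP : P.Pairwise (· ≥ ·)) {k : ℕ}
    (hk : k < P.length) (j : ℕ) : j ≤ P.getD k 0 ↔ k < (P.filter (fun p => j ≤ p)).length := by
  induction P generalizing k with
  | nil => simp at hk
  | cons a P ih =>
    rw [List.pairwise_cons] at hP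
    by_cases hja : j ≤ a
    · cases k with
      | zero => simp [hja]
      | succ k => simpa [hja] using ih hP.2 (by simpa using hk)
    · have hnil : P.filter (fun p => j ≤ p) = [] :=
        List.filter_eq_nil_iff.2 fun b hb => by
          simpa using fun h : j ≤ b => hja (h.trans (hP.1 b hb))
      cases k with
      | zero => simp [hja, hnil]
      | succ k =>
        have hkP : k < P.length := by simpa using hk
        have hle : P.getD k 0 ≤ a := hP.1 _ (List.getD_eq_getElem _ _ hkP ▸ P.getElem_mem hkP)
        simp only [List.getD_cons_succ, List.filter_cons, hja, decide_false, Bool.false_eq_true,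
          if_false, hnil, List.length_nil, Nat.not_lt_zero, iff_false]
        omega

namespace Partn

variable (l : Partn)

lemma getD_pos {i : ℕ} (hi : i < l.parts.length) : 0 < l.parts.getD i 0 :=
  l.pos _ (List.getD_eq_getElem _ _ hi ▸ l.parts.getElem_mem hi)

lemma getD_le_getD {i k : ℕ} (hik : i ≤ k) (hk : k < l.parts.length) :
    l.parts.getD k 0 ≤ l.parts.getD i 0 := by
  rw [List.getD_eq_getElem _ _ hk, List.getD_eq_getElem _ _ (hik.trans_lt hk)]
  exact l.sorted.rel_get_of_le (a := ⟨i, hik.trans_lt hk⟩) (b := ⟨k, hk⟩) hik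

lemma le_getD_iff_lt_colLen {k : ℕ} (hk : k < l.parts.length) (j : ℕ) :
    j ≤ l.parts.getD k 0 ↔ k < l.colLen j :=
  List.le_getD_iff_lt_length_filter l.sorted hk j

lemma colLen_le_length (j : ℕ) : l.colLen j ≤ l.parts.length :=
  List.length_filter_le _ _

lemma colLen_one : l.colLen 1 = l.parts.length := by
  rw [colLen, List.filter_eq_self.2 fun p hp => by simpa using Nat.one_le_of_lt (l.pos p hp)]

def beta (i : ℕ) : ℕ := l.parts.getD i 0 + (l.parts.length - 1 - i)

lemma betaSet_eq_image : l.betaSet = (range l.parts.length).image l.beta := rfl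

lemma mem_betaSet {x : ℕ} : x ∈ l.betaSet ↔ ∃ i < l.parts.length, l.beta i = x := by
  simp [betaSet, beta]

lemma beta_strictAntiOn : StrictAntiOn l.beta (Set.Iio l.parts.length) := by
  intro i _ k hk hik
  rw [Set.mem_Iio] at hk
  have := l.getD_le_getD hik.le hk
  simp only [beta]
  omega

lemma card_betaSet : #l.betaSet = l.parts.length := by
  rw [betaSet_eq_image, card_image_of_injOn (by simpa using l.beta_strictAntiOn.injOn), card_range]

lemma sum_betaSet : ∑ x ∈ l.betaSet, x = l.size + l.parts.length.choose 2 := by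
  rw [betaSet_eq_image, sum_image (by simpa using l.beta_strictAntiOn.injOn)]
  simp only [beta]
  rw [sum_add_distrib, sum_range_reflect (fun i => i) l.parts.length, sum_range_id_eq_choose_two,
    size,
    ← Fin.sum_univ_getElem, ← Fin.sum_univ_eq_sum_range]
  simp

/-- For `j ≥ 1`, the `j`-th number (from `0`) missing from the β-set: below it lie `j - 1` gaps
and the `ℓ - λ'_j` β-numbers of the rows shorter than `j`. -/
def gap (j : ℕ) : ℕ := l.parts.length + j - 1 - l.colLen j

lemma gap_one : l.gap 1 = 0 := by
  simp [gap, colLen_one]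

lemma hook_add_gap {i j : ℕ} (hi : i < l.parts.length) (hj : 1 ≤ j)
    (hji : j ≤ l.parts.getD i 0) : l.hook i j + l.gap j = l.beta i := by
  have := (l.le_getD_iff_lt_colLen hi j).1 hji
  have := l.colLen_le_length j
  simp only [hook, gap, beta]
  omega

lemma hook_one {i : ℕ} (hi : i < l.parts.length) : l.hook i 1 = l.beta i := by
  simpa [gap_one] using l.hook_add_gap hi le_rfl (l.getD_pos hi)

lemma beta_lt_gap {i : ℕ} (hi : i < l.parts.length) :
    l.beta i < l.gap (l.parts.getD i 0 + 1) := by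
  have : l.colLen (l.parts.getD i 0 + 1) ≤ i := by
    by_contra! h
    have := (l.le_getD_iff_lt_colLen hi _).2 h
    omega
  simp only [beta, gap]
  omega

lemma mem_betaSet_of_gap_lt_of_lt_gap_succ {j y : ℕ} (hj : 1 ≤ j) (hy : l.gap j < y)
    (hy' : y < l.gap (j + 1)) : y ∈ l.betaSet := by
  have := l.colLen_le_length j
  have := l.colLen_le_length (j + 1)
  simp only [gap] at hy hy'
  have hk : l.parts.length + j - 1 - y < l.parts.length := by omega
  have h1 := (l.le_getD_iff_lt_colLen hk j).2 (by omega)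
  have h2 := mt (l.le_getD_iff_lt_colLen hk (j + 1)).1 (by omega)
  refine l.mem_betaSet.2 ⟨_, hk, ?_⟩
  simp only [beta]
  omega

variable {l} {t : ℕ}

lemma IsCore.not_dvd_of_mem_betaSet (hcore : l.IsCore t) {x : ℕ} (hx : x ∈ l.betaSet) :
    ¬ t ∣ x := by
  obtain ⟨i, hi, rfl⟩ := l.mem_betaSet.1 hx
  simpa [hook_one l hi] using hcore i 1 hi le_rfl (l.getD_pos hi)

lemma IsCore.sub_mem_betaSet (hcore : l.IsCore t) {x : ℕ} (hx : x ∈ l.betaSet) (hxt : t ≤ x) :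
    x - t ∈ l.betaSet := by
  by_contra hy
  obtain ⟨i, hi, rfl⟩ := l.mem_betaSet.1 hx
  obtain ⟨j, hj, hji, hgj, hgj'⟩ := Nat.exists_le_lt_succ_of_le_of_lt (f := l.gap)
    (Nat.le_add_left 1 _) (by simp [gap_one]) ((Nat.sub_le _ _).trans_lt (l.beta_lt_gap hi))
  obtain hlt | heq := hgj.lt_or_eq
  · exact hy (l.mem_betaSet_of_gap_lt_of_lt_gap_succ hj hlt hgj')
  · have hhook : l.hook i j = t := by have := l.hook_add_gap hi hj (by omega); omega
    exact hcore i j hi hj (by omega) (hhook ▸ dvd_refl t)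

end Partn

/-- The size of a `t`-core partition in terms of the numbers `nᵢ(λ)`. -/
theorem size_eq_sum_nFn (t : ℕ) (ht : 0 < t) (lam : Partn) (hcore : lam.IsCore t) :
    (lam.size : ℤ) = (∑ i ∈ Finset.Icc 1 (t - 1),
        ((i : ℤ) * Partn.nFn t i lam + (t : ℤ) * ((Partn.nFn t i lam).choose 2 : ℤ)))
      - ((∑ i ∈ Finset.Icc 1 (t - 1), Partn.nFn t i lam).choose 2 : ℤ) := by
  have hres : ∀ x ∈ lam.betaSet, x % t ∈ Icc 1 (t - 1) := fun x hx =>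
    mem_Icc.2 ⟨Nat.pos_of_ne_zero fun h =>
      hcore.not_dvd_of_mem_betaSet hx (Nat.dvd_of_mod_eq_zero h),
      Nat.le_sub_one_of_lt (Nat.mod_lt x ht)⟩
  have hcard : lam.parts.length = ∑ i ∈ Icc 1 (t - 1), lam.nFn t i := by
    rw [← lam.card_betaSet, card_eq_sum_card_fiberwise hres]
    rfl
  have hsum : lam.size + lam.parts.length.choose 2 =
      ∑ i ∈ Icc 1 (t - 1), (i * lam.nFn t i + t * (lam.nFn t i).choose 2) := by
    rw [← lam.sum_betaSet, ← sum_fiberwise_of_maps_to hres]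
    exact sum_congr rfl fun i _ =>
      sum_filter_mod_eq_of_sub_mem ht (fun x hx => hcore.sub_mem_betaSet hx) i
  rw [← hcard]
  have := congrArg (Nat.cast : ℕ → ℤ) hsum
  push_cast at this
  linarith
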